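/- arXiv:1012.1390 — 3 statements merged into one kernel-verified Lean document; each statement's English description precedes it below -/
import Mathlib

section
/- Let Y and Z be closed subspaces of a Banach space X with Hausdorff distance d = d(Y,Z) (where d(Y,Z) = max{sup{dist(y,Z) : y ∈ Y, ‖y‖ ≤ 1}, sup{dist(z,Y) : z ∈ Z, ‖z‖ ≤ 1}}). Suppose P : X → X is a bounded linear projection onto Y with ‖P‖ < d⁻¹ - 1. Then the restriction of P to Z is a bijection from Z onto Y. -/
/-!
Fix `d'` with `d(Y,Z) < d'` and `(1 + ‖P‖) d' < 1`. Every `z ∈ Z` lies within `d'‖z‖` of some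
`y ∈ Y`, and `P` fixes `y`, so `‖P z‖ ≥ (1 - (1 + ‖P‖) d') ‖z‖`: `P` is bounded below on `Z`,
hence injective there. Conversely every `y ∈ Y` lies within `d'‖y‖` of some `z ∈ Z`, so
`‖y - P z‖ = ‖P (y - z)‖ ≤ ‖P‖ d' ‖y‖` with `‖P‖ d' < 1`; correcting the error repeatedly
gives a geometric series in the complete space `Z` whose sum is an exact preimage of `y`.
-/

open NormedSpace Metric

noncomputable section

universe u v w

/-- The Hausdorff distance between two subspaces of a normed space, computed via
their unit balls: `d(Y,Z) = max {sup {dist(y,Z) : y ∈ Y, ‖y‖ ≤ 1}, sup {dist(z,Y) : z ∈ Z, ‖z‖ ≤ 1}}`. -/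
def subHausdorffDist (X : Type u) [NormedAddCommGroup X] [NormedSpace ℂ X]
    (Y Z : Submodule ℂ X) : ℝ :=
  max (sSup ((fun y => Metric.infDist y (Z : Set X)) '' {y : X | y ∈ Y ∧ ‖y‖ ≤ 1}))
      (sSup ((fun z => Metric.infDist z (Y : Set X)) '' {z : X | z ∈ Z ∧ ‖z‖ ≤ 1}))

section SuccessiveApproximation

variable {𝕜 E F : Type*} [NontriviallyNormedField 𝕜] [NormedAddCommGroup E] [NormedSpace 𝕜 E]
  [CompleteSpace E] [NormedAddCommGroup F] [NormedSpace 𝕜 F]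

theorem ContinuousLinearMap.surjOn_of_approx (T : E →L[𝕜] F) {Z : Submodule 𝕜 E}
    {Y : Submodule 𝕜 F} (hZ : IsClosed (Z : Set E)) (hTZ : Set.MapsTo T Z Y) {C r : ℝ}
    (hC : 0 ≤ C) (hr₀ : 0 ≤ r) (hr₁ : r < 1)
    (happrox : ∀ y ∈ Y, ∃ z ∈ Z, ‖z‖ ≤ C * ‖y‖ ∧ ‖y - T z‖ ≤ r * ‖y‖) :
    Set.SurjOn T Z Y := by
  intro y hy
  choose! G hGZ hGnorm hGerr using happrox
  set w : ℕ → F := fun n => (fun v => v - T (G v))^[n] y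
  have hw_succ : ∀ n, w (n + 1) = w n - T (G (w n)) := fun n =>
    Function.iterate_succ_apply' _ n y
  have hwY : ∀ n, w n ∈ Y := by
    intro n
    induction n with
    | zero => exact hy
    | succ n ih => rw [hw_succ]; exact Y.sub_mem ih (hTZ (hGZ _ ih))
  have hw_norm : ∀ n, ‖w n‖ ≤ r ^ n * ‖y‖ := by
    intro n
    induction n with
    | zero => simp [w]
    | succ n ih =>
      rw [hw_succ, pow_succ', mul_assoc]
      exact (hGerr _ (hwY n)).trans (mul_le_mul_of_nonneg_left ih hr₀)
  have hG_norm : ∀ n, ‖G (w n)‖ ≤ C * ‖y‖ * r ^ n := by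
    intro n
    calc ‖G (w n)‖ ≤ C * ‖w n‖ := hGnorm _ (hwY n)
      _ ≤ C * (r ^ n * ‖y‖) := mul_le_mul_of_nonneg_left (hw_norm n) hC
      _ = C * ‖y‖ * r ^ n := by ring
  have hsum : Summable fun n => G (w n) :=
    .of_norm_bounded ((summable_geometric_of_lt_one hr₀ hr₁).mul_left _) hG_norm
  have hpartial : ∀ N, T (∑ i ∈ Finset.range N, G (w i)) = y - w N := by
    intro N
    induction N with
    | zero => simp [w]
    | succ N ih => rw [Finset.sum_range_succ, map_add, ih, hw_succ]; abel
  have hw_zero : Filter.Tendsto w Filter.atTop (nhds 0) := by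
    refine squeeze_zero_norm hw_norm ?_
    simpa using (tendsto_pow_atTop_nhds_zero_of_lt_one hr₀ hr₁).mul_const ‖y‖
  refine ⟨∑' n, G (w n), ?_, ?_⟩
  · exact hZ.mem_of_tendsto hsum.tendsto_sum_tsum_nat
      (.of_forall fun N => Z.sum_mem fun i _ => hGZ _ (hwY i))
  · refine tendsto_nhds_unique ((T.continuous.tendsto _).comp hsum.tendsto_sum_tsum_nat) ?_
    simp only [Function.comp_def, hpartial]
    simpa using tendsto_const_nhds.sub hw_zero

end SuccessiveApproximation

theorem LinearMap.injOn_of_mul_norm_le {𝕜 E F : Type*} [Ring 𝕜] [NormedAddCommGroup E]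
    [NormedAddCommGroup F] [Module 𝕜 E] [Module 𝕜 F] (T : E →ₗ[𝕜] F) {Z : Submodule 𝕜 E}
    {c : ℝ} (hc : 0 < c) (hT : ∀ z ∈ Z, c * ‖z‖ ≤ ‖T z‖) : Set.InjOn T Z := by
  intro z₁ hz₁ z₂ hz₂ h
  have := hT _ (Z.sub_mem hz₁ hz₂)
  rw [map_sub, h, sub_self, norm_zero] at this
  exact sub_eq_zero.1 (norm_le_zero_iff.1 (nonpos_of_mul_nonpos_right this hc))

section HausdorffDist

variable {X : Type u} [NormedAddCommGroup X] [NormedSpace ℂ X] {Y Z : Submodule ℂ X}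

theorem subHausdorffDist_comm : subHausdorffDist X Y Z = subHausdorffDist X Z Y :=
  max_comm _ _

theorem infDist_le_subHausdorffDist {y : X} (hy : y ∈ Y) (hy₁ : ‖y‖ ≤ 1) :
    infDist y (Z : Set X) ≤ subHausdorffDist X Y Z := by
  have hbdd : BddAbove ((fun y => infDist y (Z : Set X)) '' {y : X | y ∈ Y ∧ ‖y‖ ≤ 1}) := by
    refine ⟨1, ?_⟩
    rintro _ ⟨x, ⟨-, hx₁⟩, rfl⟩
    simpa using (infDist_le_dist_of_mem Z.zero_mem (x := x)).trans (by simpa using hx₁)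
  exact (le_csSup hbdd ⟨y, ⟨hy, hy₁⟩, rfl⟩).trans (le_max_left _ _)

theorem exists_norm_sub_le_of_subHausdorffDist_lt {d : ℝ} (hd : subHausdorffDist X Y Z < d)
    {y : X} (hy : y ∈ Y) : ∃ z ∈ Z, ‖y - z‖ ≤ d * ‖y‖ := by
  rcases eq_or_ne y 0 with rfl | hy₀
  · exact ⟨0, Z.zero_mem, by simp⟩
  set c : ℂ := (‖y‖ : ℂ)
  have hc : ‖c‖ = ‖y‖ := by simp [c]
  have hc₀ : c ≠ 0 := by simpa [c] using hy₀
  have hunit : ‖c⁻¹ • y‖ = 1 := by rw [norm_smul, norm_inv, hc, inv_mul_cancel₀ (by simpa)]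
  obtain ⟨z, hz, hdist⟩ := (infDist_lt_iff ⟨0, Z.zero_mem⟩).1
    ((infDist_le_subHausdorffDist (Y.smul_mem _ hy) hunit.le).trans_lt hd)
  refine ⟨c • z, Z.smul_mem c hz, ?_⟩
  calc ‖y - c • z‖ = ‖c‖ * ‖c⁻¹ • y - z‖ := by rw [← norm_smul, smul_sub, smul_inv_smul₀ hc₀]
    _ ≤ ‖y‖ * d := by rw [hc, ← dist_eq_norm]; gcongr
    _ = d * ‖y‖ := mul_comm _ _

variable {P : X →L[ℂ] X} {d : ℝ}

theorem mul_norm_le_norm_apply_of_subHausdorffDist_lt (hP : ∀ y ∈ Y, P y = y)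
    (hd : subHausdorffDist X Y Z < d) {z : X} (hz : z ∈ Z) :
    (1 - (1 + ‖P‖) * d) * ‖z‖ ≤ ‖P z‖ := by
  obtain ⟨y, hy, hzy⟩ :=
    exists_norm_sub_le_of_subHausdorffDist_lt (subHausdorffDist_comm.symm.trans_lt hd) hz
  have hPz : P z - P (z - y) = y := by rw [map_sub, hP y hy, sub_sub_cancel]
  have hy_le := norm_sub_le (P z) (P (z - y))
  rw [hPz] at hy_le
  have hz_le := norm_sub_norm_le z y
  have hPzy := P.le_opNorm (z - y)
  have hzy' := mul_le_mul_of_nonneg_left hzy (by positivity : 0 ≤ 1 + ‖P‖)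
  linarith

theorem exists_approx_preimage_of_subHausdorffDist_lt (hP : ∀ y ∈ Y, P y = y)
    (hd : subHausdorffDist X Y Z < d) {y : X} (hy : y ∈ Y) :
    ∃ z ∈ Z, ‖z‖ ≤ (1 + d) * ‖y‖ ∧ ‖y - P z‖ ≤ ‖P‖ * d * ‖y‖ := by
  obtain ⟨z, hz, hyz⟩ := exists_norm_sub_le_of_subHausdorffDist_lt hd hy
  refine ⟨z, hz, ?_, ?_⟩
  · calc ‖z‖ ≤ ‖y‖ + ‖y - z‖ := by simpa using norm_sub_le y (y - z)
      _ ≤ (1 + d) * ‖y‖ := by linarith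
  · calc ‖y - P z‖ = ‖P (y - z)‖ := by rw [map_sub, hP y hy]
      _ ≤ ‖P‖ * ‖y - z‖ := P.le_opNorm _
      _ ≤ ‖P‖ * d * ‖y‖ := by rw [mul_assoc]; gcongr

end HausdorffDist

theorem stmt0_general {X : Type u} [NormedAddCommGroup X] [NormedSpace ℂ X] [CompleteSpace X]
    (Y Z : Submodule ℂ X) (hZ : IsClosed (Z : Set X))
    (P : X →L[ℂ] X) (hproj : ∀ x, P (P x) = P x) (hrange : LinearMap.range (P : X →ₗ[ℂ] X) = Y)
    (hnorm : ‖P‖ < (subHausdorffDist X Y Z)⁻¹ - 1) :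
    Set.BijOn P (Z : Set X) (Y : Set X) := by
  have hPY : ∀ x, P x ∈ Y := fun x => hrange ▸ LinearMap.mem_range_self _ x
  have hPfix : ∀ y ∈ Y, P y = y := by
    rintro _ hy
    obtain ⟨x, rfl⟩ := hrange ▸ hy
    exact hproj x
  have hP₁ : 0 < 1 + ‖P‖ := by positivity
  have hd₀ : 0 < subHausdorffDist X Y Z := inv_pos.1 (by linarith)
  obtain ⟨d, hd, hd_lt⟩ :=
    exists_between ((lt_inv_comm₀ hd₀ hP₁).2 (by linarith : 1 + ‖P‖ < _))
  have hd_pos : 0 < d := hd₀.trans hd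
  have hPd : (1 + ‖P‖) * d < 1 :=
    calc (1 + ‖P‖) * d < (1 + ‖P‖) * (1 + ‖P‖)⁻¹ := by gcongr
      _ = 1 := mul_inv_cancel₀ hP₁.ne'
  refine ⟨fun z _ => hPY z, ?_, ?_⟩
  · exact LinearMap.injOn_of_mul_norm_le (P : X →ₗ[ℂ] X) (by linarith)
      fun z hz => mul_norm_le_norm_apply_of_subHausdorffDist_lt hPfix hd hz
  · exact P.surjOn_of_approx hZ (fun x _ => hPY x) (by positivity) (by positivity) (by nlinarith)
      fun y hy => exists_approx_preimage_of_subHausdorffDist_lt hPfix hd hy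

theorem stmt0 {X : Type u} [NormedAddCommGroup X] [NormedSpace ℂ X] [CompleteSpace X]
    (Y Z : Submodule ℂ X) (hY : IsClosed (Y : Set X)) (hZ : IsClosed (Z : Set X))
    (P : X →L[ℂ] X) (hproj : ∀ x, P (P x) = P x) (hrange : LinearMap.range (P : X →ₗ[ℂ] X) = Y)
    (hnorm : ‖P‖ < (subHausdorffDist X Y Z)⁻¹ - 1) :
    Set.BijOn P (Z : Set X) (Y : Set X) :=
  stmt0_general Y Z hZ P hproj hrange hnorm
end
end

section
/- Let Y and Z be closed subspaces of a Banach space X with Hausdorff distance d = d(Y,Z), and let P : X → X be a bounded projection onto Y with ‖P‖ < d⁻¹ - 1. Then the inverse α : Y → Z of P restricted to Z satisfies ‖α‖ ≤ (1+d)(1 - ‖P‖·d)⁻¹ and ‖α(y) - y‖ ≤ ((1+d)(1 - ‖P‖·d)⁻¹ - 1)·‖y‖ for all y ∈ Y. -/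
/-!
Write `p = ‖P‖`. For `w ∈ Z`, comparing `w` with the points of `Z` near `P w ∈ Y` shows that
any constant `b` with `‖w‖ ≤ b ‖P w‖` on `Z` improves to `1 + d + p d b`. A first constant
`(1 - (1 + p) d)⁻¹` comes from `‖w - P w‖ ≤ (1 + p) dist(w, Y) ≤ (1 + p) d ‖w‖`, and since the
admissible constants form a closed set, iterating the contraction `b ↦ 1 + d + p d b` reaches its
fixed point `c = (1 + d) / (1 - p d)`. The same comparison, run with `c`, gives
`‖w - P w‖ ≤ (1 + c p) d ‖P w‖ = (c - 1) ‖P w‖`; apply both bounds to `w = α y`.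
-/

open NormedSpace Metric

noncomputable section

universe u v w

open Filter Topology Pointwise

theorem IsClosed.div_one_sub_mem_of_forall_add_mul_mem {s : Set ℝ} (hs : IsClosed s)
    {a r b : ℝ} (hr : |r| < 1) (hb : b ∈ s) (hmaps : ∀ x ∈ s, a + r * x ∈ s) :
    a / (1 - r) ∈ s := by
  have hr1 : 1 - r ≠ 0 := by linarith [le_abs_self r]
  set c := a / (1 - r)
  -- the `n`-th iterate of `x ↦ a + r * x` starting at `b`, in closed form
  have hiter : ∀ n : ℕ, c + r ^ n * (b - c) ∈ s := by
    intro n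
    induction n with
    | zero => simpa using hb
    | succ n ih =>
      convert hmaps _ ih using 1
      simp only [c]
      field_simp
      ring
  have hlim : Tendsto (fun n : ℕ => c + r ^ n * (b - c)) atTop (𝓝 c) := by
    simpa using tendsto_const_nhds.add
      ((tendsto_pow_atTop_nhds_zero_of_abs_lt_one hr).mul_const (b - c))
  exact hs.mem_of_tendsto hlim (Eventually.of_forall hiter)

theorem Metric.le_mul_infDist_of_forall {α : Type*} [PseudoMetricSpace α] {s : Set α}
    (hs : s.Nonempty) {x : α} {r c : ℝ} (hc : 0 < c) (h : ∀ y ∈ s, r ≤ c * dist x y) :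
    r ≤ c * infDist x s := by
  rw [← div_le_iff₀' hc, le_infDist hs]
  exact fun y hy => (div_le_iff₀' hc).2 (h y hy)

theorem Submodule.infDist_smul {𝕜 X : Type*} [NormedField 𝕜] [NormedAddCommGroup X]
    [NormedSpace 𝕜 X] (Y : Submodule 𝕜 X) (c : 𝕜) (x : X) :
    infDist (c • x) (Y : Set X) = ‖c‖ * infDist x Y := by
  rcases eq_or_ne c 0 with rfl | hc
  · simp [infDist_zero_of_mem Y.zero_mem]
  have hY : c • (Y : Set X) = Y := by
    ext x
    simp [Set.mem_smul_set_iff_inv_smul_mem₀ hc, Y.smul_mem_iff (inv_ne_zero hc)]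
  rw [← infDist_smul₀ hc, hY]

section UnitBall

variable {𝕜 X : Type*} [RCLike 𝕜] [NormedAddCommGroup X] [NormedSpace 𝕜 X]

theorem infDist_le_mul_norm_of_forall_norm_le_one (Y Z : Submodule 𝕜 X) {s : ℝ}
    (h : ∀ z ∈ Z, ‖z‖ ≤ 1 → infDist z (Y : Set X) ≤ s) {z : X} (hz : z ∈ Z) :
    infDist z (Y : Set X) ≤ s * ‖z‖ := by
  rcases eq_or_ne z 0 with rfl | hz0
  · simp [infDist_zero_of_mem Y.zero_mem]
  have hnz : (‖z‖ : 𝕜) ≠ 0 := by simpa using hz0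
  calc infDist z (Y : Set X)
      = infDist ((‖z‖ : 𝕜) • ((‖z‖ : 𝕜)⁻¹ • z)) (Y : Set X) := by rw [smul_inv_smul₀ hnz]
    _ = ‖z‖ * infDist ((‖z‖ : 𝕜)⁻¹ • z) (Y : Set X) := by
      rw [Y.infDist_smul, RCLike.norm_ofReal, abs_norm]
    _ ≤ ‖z‖ * s :=
      mul_le_mul_of_nonneg_left
        (h _ (Z.smul_mem _ hz) (norm_smul_inv_norm hz0).le) (norm_nonneg z)
    _ = s * ‖z‖ := mul_comm _ _

theorem infDist_le_sSup_mul_norm (Y Z : Submodule 𝕜 X) {z : X} (hz : z ∈ Z) :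
    infDist z (Y : Set X) ≤
      sSup ((fun w => infDist w (Y : Set X)) '' {w : X | w ∈ Z ∧ ‖w‖ ≤ 1}) * ‖z‖ := by
  have hbdd : BddAbove ((fun w => infDist w (Y : Set X)) '' {w : X | w ∈ Z ∧ ‖w‖ ≤ 1}) := by
    refine ⟨1, ?_⟩
    rintro _ ⟨w, ⟨-, hw⟩, rfl⟩
    simpa using (infDist_le_dist_of_mem Y.zero_mem (x := w)).trans (by simpa using hw)
  exact infDist_le_mul_norm_of_forall_norm_le_one Y Z
    (fun w hw hw1 => le_csSup hbdd ⟨w, ⟨hw, hw1⟩, rfl⟩) hz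

end UnitBall

theorem infDist_le_subHausdorffDist_mul_left {X : Type u} [NormedAddCommGroup X]
    [NormedSpace ℂ X] (Y Z : Submodule ℂ X) {y : X} (hy : y ∈ Y) :
    infDist y (Z : Set X) ≤ subHausdorffDist X Y Z * ‖y‖ :=
  (infDist_le_sSup_mul_norm Z Y hy).trans
    (mul_le_mul_of_nonneg_right (le_max_left _ _) (norm_nonneg y))

theorem infDist_le_subHausdorffDist_mul_right {X : Type u} [NormedAddCommGroup X]
    [NormedSpace ℂ X] (Y Z : Submodule ℂ X) {z : X} (hz : z ∈ Z) :
    infDist z (Y : Set X) ≤ subHausdorffDist X Y Z * ‖z‖ :=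
  (infDist_le_sSup_mul_norm Y Z hz).trans
    (mul_le_mul_of_nonneg_right (le_max_right _ _) (norm_nonneg z))

section Projection

variable {𝕜 X : Type*} [NontriviallyNormedField 𝕜] [NormedAddCommGroup X] [NormedSpace 𝕜 X]
  {P : X →L[𝕜] X}

theorem norm_sub_apply_le_mul_infDist {Y : Set X} (hY : Y.Nonempty) (hP : ∀ y ∈ Y, P y = y)
    (x : X) : ‖x - P x‖ ≤ (1 + ‖P‖) * infDist x Y := by
  refine le_mul_infDist_of_forall hY (by positivity) fun y hy => ?_
  calc ‖x - P x‖ = ‖(x - y) - P (x - y)‖ := by rw [map_sub, hP y hy, sub_sub_sub_cancel_right]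
    _ ≤ ‖x - y‖ + ‖P‖ * ‖x - y‖ := (norm_sub_le _ _).trans (by gcongr; exact P.le_opNorm _)
    _ = (1 + ‖P‖) * dist x y := by rw [dist_eq_norm]; ring

theorem norm_sub_apply_le_mul_infDist_apply {Z : Submodule 𝕜 X} (hproj : ∀ x, P (P x) = P x)
    {b : ℝ} (hb0 : 0 ≤ b) (hb : ∀ w ∈ Z, ‖w‖ ≤ b * ‖P w‖) {w : X} (hw : w ∈ Z) :
    ‖w - P w‖ ≤ (1 + b * ‖P‖) * infDist (P w) Z := by
  refine le_mul_infDist_of_forall ⟨0, Z.zero_mem⟩ (by positivity) fun z hz => ?_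
  have hPwz : P (w - z) = P (P w - z) := by rw [map_sub, map_sub, hproj]
  calc ‖w - P w‖ = ‖(w - z) - (P w - z)‖ := by rw [sub_sub_sub_cancel_right]
    _ ≤ b * ‖P (P w - z)‖ + ‖P w - z‖ :=
      (norm_sub_le _ _).trans (by gcongr; exact hPwz ▸ hb _ (Z.sub_mem hw hz))
    _ ≤ b * (‖P‖ * ‖P w - z‖) + ‖P w - z‖ := by gcongr; exact P.le_opNorm _
    _ = (1 + b * ‖P‖) * dist (P w) z := by rw [dist_eq_norm]; ring

theorem norm_le_div_mul_norm_apply {Y Z : Submodule 𝕜 X} (hPY : ∀ x, P x ∈ Y)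
    (hP : ∀ y ∈ Y, P y = y) {d : ℝ} (hYZ : ∀ y ∈ Y, infDist y (Z : Set X) ≤ d * ‖y‖)
    (hZY : ∀ z ∈ Z, infDist z (Y : Set X) ≤ d * ‖z‖) (hd0 : 0 ≤ d) (hd : (1 + ‖P‖) * d < 1)
    {w : X} (hw : w ∈ Z) : ‖w‖ ≤ (1 + d) / (1 - ‖P‖ * d) * ‖P w‖ := by
  have hproj : ∀ x, P (P x) = P x := fun x => hP _ (hPY x)
  have hpd : |‖P‖ * d| < 1 := by rw [abs_of_nonneg (by positivity)]; nlinarith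
  set s : Set ℝ := {b | 0 ≤ b ∧ ∀ w ∈ Z, ‖w‖ ≤ b * ‖P w‖}
  have hs : IsClosed s := by
    simp only [s, Set.ofPred_and, Set.ofPred_forall]
    exact isClosed_Ici.inter <| isClosed_iInter fun w => isClosed_iInter fun _ =>
      isClosed_le continuous_const (continuous_id.mul continuous_const)
  have hbase : (1 - (1 + ‖P‖) * d)⁻¹ ∈ s := by
    refine ⟨by rw [inv_nonneg]; linarith, fun w hw => ?_⟩
    have h : ‖w‖ ≤ ‖P w‖ + (1 + ‖P‖) * (d * ‖w‖) :=
      calc ‖w‖ ≤ ‖P w‖ + ‖w - P w‖ := norm_le_insert' _ _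
        _ ≤ ‖P w‖ + (1 + ‖P‖) * (d * ‖w‖) := by
          gcongr
          exact (norm_sub_apply_le_mul_infDist ⟨0, Y.zero_mem⟩ hP w).trans
            (by gcongr; exact hZY w hw)
    rw [← div_eq_inv_mul, le_div_iff₀ (by linarith)]
    linarith
  have hstep : ∀ b ∈ s, 1 + d + ‖P‖ * d * b ∈ s := by
    rintro b ⟨hb0, hb⟩
    refine ⟨by positivity, fun w hw => ?_⟩
    calc ‖w‖ ≤ ‖P w‖ + ‖w - P w‖ := norm_le_insert' _ _
      _ ≤ ‖P w‖ + (1 + b * ‖P‖) * (d * ‖P w‖) := by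
          gcongr
          exact (norm_sub_apply_le_mul_infDist_apply hproj hb0 hb hw).trans
            (by gcongr; exact hYZ _ (hPY w))
      _ = (1 + d + ‖P‖ * d * b) * ‖P w‖ := by ring
  exact (hs.div_one_sub_mem_of_forall_add_mul_mem hpd hbase hstep).2 w hw

theorem norm_sub_apply_le_div_sub_one_mul_norm_apply {Y Z : Submodule 𝕜 X}
    (hPY : ∀ x, P x ∈ Y) (hP : ∀ y ∈ Y, P y = y) {d : ℝ}
    (hYZ : ∀ y ∈ Y, infDist y (Z : Set X) ≤ d * ‖y‖)
    (hZY : ∀ z ∈ Z, infDist z (Y : Set X) ≤ d * ‖z‖) (hd0 : 0 ≤ d) (hd : (1 + ‖P‖) * d < 1)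
    {w : X} (hw : w ∈ Z) : ‖w - P w‖ ≤ ((1 + d) / (1 - ‖P‖ * d) - 1) * ‖P w‖ := by
  have hpd : 0 < 1 - ‖P‖ * d := by nlinarith
  set c := (1 + d) / (1 - ‖P‖ * d)
  have hc : (1 + c * ‖P‖) * d = c - 1 := by
    linear_combination -(div_mul_cancel₀ (1 + d) hpd.ne')
  calc ‖w - P w‖ ≤ (1 + c * ‖P‖) * infDist (P w) Z :=
        norm_sub_apply_le_mul_infDist_apply (fun x => hP _ (hPY x)) (by positivity)
          (fun w hw => norm_le_div_mul_norm_apply hPY hP hYZ hZY hd0 hd hw) hw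
    _ ≤ (1 + c * ‖P‖) * (d * ‖P w‖) := by gcongr; exact hYZ _ (hPY w)
    _ = (c - 1) * ‖P w‖ := by rw [← hc, mul_assoc]

end Projection

theorem stmt1_general {X : Type u} [NormedAddCommGroup X] [NormedSpace ℂ X]
    (Y Z : Submodule ℂ X)
    (P : X →L[ℂ] X) (hproj : ∀ x, P (P x) = P x) (hrange : LinearMap.range (P : X →ₗ[ℂ] X) = Y)
    (hnorm : ‖P‖ < (subHausdorffDist X Y Z)⁻¹ - 1)
    (α : X → X) (hα : ∀ y ∈ Y, α y ∈ Z ∧ P (α y) = y) :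
    ∀ y ∈ Y,
      ‖α y‖ ≤ (1 + subHausdorffDist X Y Z) * (1 - ‖P‖ * subHausdorffDist X Y Z)⁻¹ * ‖y‖ ∧
      ‖α y - y‖ ≤
        ((1 + subHausdorffDist X Y Z) * (1 - ‖P‖ * subHausdorffDist X Y Z)⁻¹ - 1) * ‖y‖ := by
  set d := subHausdorffDist X Y Z
  have hd0 : 0 < d := by
    by_contra! h
    linarith [inv_nonpos.2 h, norm_nonneg P]
  have hd : (1 + ‖P‖) * d < 1 := by
    simpa [inv_mul_cancel₀ hd0.ne'] using mul_lt_mul_of_pos_right (by linarith : 1 + ‖P‖ < d⁻¹) hd0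
  have hPY : ∀ x, P x ∈ Y := fun x => hrange ▸ LinearMap.mem_range_self _ x
  have hP : ∀ y ∈ Y, P y = y := by
    rintro _ hy
    obtain ⟨x, rfl⟩ := hrange ▸ hy
    exact hproj x
  have hYZ := fun y (hy : y ∈ Y) => infDist_le_subHausdorffDist_mul_left Y Z hy
  have hZY := fun z (hz : z ∈ Z) => infDist_le_subHausdorffDist_mul_right Y Z hz
  intro y hy
  obtain ⟨hαZ, hαP⟩ := hα y hy
  rw [← div_eq_mul_inv]
  have hαy := norm_le_div_mul_norm_apply hPY hP hYZ hZY hd0.le hd hαZ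
  have hαy_sub := norm_sub_apply_le_div_sub_one_mul_norm_apply hPY hP hYZ hZY hd0.le hd hαZ
  rw [hαP] at hαy hαy_sub
  exact ⟨hαy, hαy_sub⟩

theorem stmt1 {X : Type u} [NormedAddCommGroup X] [NormedSpace ℂ X] [CompleteSpace X]
    (Y Z : Submodule ℂ X) (hY : IsClosed (Y : Set X)) (hZ : IsClosed (Z : Set X))
    (P : X →L[ℂ] X) (hproj : ∀ x, P (P x) = P x) (hrange : LinearMap.range (P : X →ₗ[ℂ] X) = Y)
    (hnorm : ‖P‖ < (subHausdorffDist X Y Z)⁻¹ - 1)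
    (α : X → X) (hα : ∀ y ∈ Y, α y ∈ Z ∧ P (α y) = y) :
    ∀ y ∈ Y,
      ‖α y‖ ≤ (1 + subHausdorffDist X Y Z) * (1 - ‖P‖ * subHausdorffDist X Y Z)⁻¹ * ‖y‖ ∧
      ‖α y - y‖ ≤
        ((1 + subHausdorffDist X Y Z) * (1 - ‖P‖ * subHausdorffDist X Y Z)⁻¹ - 1) * ‖y‖ :=
  stmt1_general Y Z P hproj hrange hnorm α hα
end
end

section
/- Let A be a unital Banach algebra and suppose the kernel of the multiplication map π : A ⊗̂ A^{op} → A has a bounded right approximate identity (equivalently, ker π** has a right identity for the first Arens product). Then A is amenable. -/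
open NormedSpace Metric

noncomputable section

universe u v w

/-- The Banach-space transpose (adjoint) of a continuous linear map. -/
def dualTranspose {X : Type u} {Y : Type v} [NormedAddCommGroup X] [NormedSpace ℂ X]
    [NormedAddCommGroup Y] [NormedSpace ℂ Y] (f : X →L[ℂ] Y) :
    StrongDual ℂ Y →L[ℂ] StrongDual ℂ X :=
  (ContinuousLinearMap.compL ℂ X Y ℂ).flip f

/-- The bidual (double adjoint) map `f** : X** → Y**`. -/
def bidualMap {X : Type u} {Y : Type v} [NormedAddCommGroup X] [NormedSpace ℂ X]
    [NormedAddCommGroup Y] [NormedSpace ℂ Y] (f : X →L[ℂ] Y) :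
    StrongDual ℂ (StrongDual ℂ X) →L[ℂ] StrongDual ℂ (StrongDual ℂ Y) :=
  dualTranspose (dualTranspose f)

/-- `(T, p)` is (an isometric copy of) the projective tensor product `A ⊗̂ A`:
`p` is a contractive bilinear map with dense span satisfying the universal
property of the projective tensor norm. -/
structure IsProjTensorProduct (A : Type u) (T : Type v) [NormedAddCommGroup A]
    [NormedSpace ℂ A] [NormedAddCommGroup T] [NormedSpace ℂ T] [CompleteSpace T]
    (p : A →L[ℂ] A →L[ℂ] T) : Prop where
  norm_tmul_le : ∀ a b : A, ‖p a b‖ ≤ ‖a‖ * ‖b‖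
  dense_span : Dense (↑(Submodule.span ℂ (Set.range fun ab : A × A => p ab.1 ab.2)) : Set T)
  lift : ∀ {W : Type w} [NormedAddCommGroup W] [NormedSpace ℂ W] [CompleteSpace W]
      (f : A →L[ℂ] A →L[ℂ] W), ∃ g : T →L[ℂ] W, (∀ a b : A, g (p a b) = f a b) ∧ ‖g‖ ≤ ‖f‖

/-- Amenability of the Banach algebra given by the (bounded, associative) multiplication `μ`
on the Banach space `A`: every continuous derivation into the dual of any Banach
`A`-bimodule is inner.  The bimodule is described by its bounded left and right actions
`l` and `r`; the dual module actions are `(a · f) x = f (r x a)` and `(f · a) x = f (l a x)`. -/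
def IsAmenableMul {A : Type u} [NormedAddCommGroup A] [NormedSpace ℂ A] [CompleteSpace A]
    (μ : A →L[ℂ] A →L[ℂ] A) : Prop :=
  ∀ (X : Type u) [NormedAddCommGroup X] [NormedSpace ℂ X] [CompleteSpace X]
    (l : A →L[ℂ] X →L[ℂ] X) (r : X →L[ℂ] A →L[ℂ] X),
    (∀ a b x, l (μ a b) x = l a (l b x)) →
    (∀ x a b, r (r x a) b = r x (μ a b)) →
    (∀ a x b, r (l a x) b = l a (r x b)) →
    ∀ D : A →L[ℂ] StrongDual ℂ X,
      (∀ a b x, D (μ a b) x = D b (r x a) + D a (l b x)) →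
      ∃ f : StrongDual ℂ X, ∀ a x, D a x = f (r x a) - f (l a x)

/-! If `uᵢ` is a bounded right approximate identity of `ker π`, then `vᵢ = 1 ⊗ 1 - uᵢ` is a
bounded approximate diagonal: `π vᵢ = 1` and `(a ⊗ 1 - 1 ⊗ a) ⋆ vᵢ → 0`. Given a derivation
`D : A → X*`, push `vᵢ` through the bounded map `a ⊗ b ↦ a · D b`; a weak-* cluster point `f` of
the images satisfies `a · f - f · a = 1 · D a`, and correcting `f` by `D 1 · 1` makes `D` inner. -/

open Filter Topology

theorem exists_tendsto_of_boundedRightApproxIdentity {T : Type*} [SeminormedAddCommGroup T]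
    (m : T → T → T) (S : Set T) {M : ℝ}
    (h : ∀ s : Finset T, (∀ x ∈ s, x ∈ S) → ∀ ε : ℝ, 0 < ε →
      ∃ u ∈ S, ‖u‖ ≤ M ∧ ∀ x ∈ s, ‖m x u - x‖ < ε) :
    ∃ u : Finset T × ℕ → T, (∀ i, u i ∈ S ∧ ‖u i‖ ≤ M) ∧
      ∀ x ∈ S, Tendsto (fun i => m x (u i)) atTop (𝓝 x) := by
  classical
  choose u huS huM hu using fun i : Finset T × ℕ =>
    h {x ∈ i.1 | x ∈ S} (fun x hx => (Finset.mem_filter.mp hx).2) (1 / (i.2 + 1))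
      Nat.one_div_pos_of_nat
  refine ⟨u, fun i => ⟨huS i, huM i⟩, fun x hx => Metric.tendsto_nhds.mpr fun ε hε => ?_⟩
  obtain ⟨n, hn⟩ := exists_nat_one_div_lt hε
  filter_upwards [eventually_ge_atTop ({x}, n)] with i hi
  rw [dist_eq_norm]
  calc ‖m x (u i) - x‖ < 1 / (i.2 + 1) :=
        hu i x (Finset.mem_filter.mpr ⟨hi.1 (Finset.mem_singleton_self x), hx⟩)
    _ ≤ 1 / (n + 1) := Nat.one_div_le_one_div hi.2
    _ < ε := hn

theorem StrongDual.exists_apply_eq_of_tendsto {𝕜 : Type*} [NontriviallyNormedField 𝕜]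
    [ProperSpace 𝕜] {X : Type*} [SeminormedAddCommGroup X] [NormedSpace 𝕜 X] {ι : Type*}
    {F : Filter ι} [F.NeBot] {φ : ι → StrongDual 𝕜 X} {R : ℝ} (hφ : ∀ i, ‖φ i‖ ≤ R) :
    ∃ f : StrongDual 𝕜 X, ∀ (x : X) (c : 𝕜), Tendsto (fun i => φ i x) F (𝓝 c) → f x = c := by
  obtain ⟨f, -, hf⟩ := (WeakDual.isCompact_closedBall (0 : StrongDual 𝕜 X) R).exists_clusterPt
    (f := map (fun i => StrongDual.toWeakDual (φ i)) F)
    (le_principal_iff.mpr <| mem_map.mpr <| univ_mem' fun i => by simpa using hφ i)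
  refine ⟨WeakDual.toStrongDual f, fun x c hc => ?_⟩
  exact eq_of_nhds_neBot <| (hf.map (WeakDual.eval_continuous x).continuousAt tendsto_map).mono
    (by rwa [map_map])

namespace IsProjTensorProduct

variable {A : Type u} {T : Type v} [NormedAddCommGroup A] [NormedSpace ℂ A]
  [NormedAddCommGroup T] [NormedSpace ℂ T] [CompleteSpace T] {p : A →L[ℂ] A →L[ℂ] T}

theorem ext (hp : IsProjTensorProduct.{u, v, w} A T p) {W : Type*} [NormedAddCommGroup W]
    [NormedSpace ℂ W] {φ ψ : T →L[ℂ] W} (h : ∀ a b, φ (p a b) = ψ (p a b)) : φ = ψ := by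
  refine DFunLike.coe_injective (Continuous.ext_on hp.dense_span φ.continuous
    ψ.continuous fun t ht => LinearMap.eqOn_span ?_ ht)
  rintro _ ⟨⟨a, b⟩, rfl⟩
  exact h a b

/-- `hp.lift` only applies to targets in the universe `w`, hence the detour through `ULift ℂ`. -/
theorem exists_lift_scalar (hp : IsProjTensorProduct.{u, v, w} A T p)
    (f : A →L[ℂ] A →L[ℂ] ℂ) : ∃ g : T →L[ℂ] ℂ, (∀ a b, g (p a b) = f a b) ∧ ‖g‖ ≤ ‖f‖ := by
  let e := LinearIsometryEquiv.ulift.{_, _, w} ℂ ℂ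
  let f' : A →L[ℂ] A →L[ℂ] ULift.{w} ℂ :=
    (ContinuousLinearMap.compL ℂ A ℂ _ e.symm.toLinearIsometry.toContinuousLinearMap).comp f
  have hf' : ‖f'‖ ≤ ‖f‖ := ContinuousLinearMap.opNorm_le_bound₂ _ (norm_nonneg f)
    fun a b => by simpa [f'] using f.le_opNorm₂ a b
  obtain ⟨g, hg, hgn⟩ := hp.lift f'
  refine ⟨e.toLinearIsometry.toContinuousLinearMap.comp g, fun a b => by simp [hg, f'], ?_⟩
  calc _ ≤ ‖g‖ := e.toLinearIsometry.norm_toContinuousLinearMap_comp.le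
    _ ≤ ‖f‖ := hgn.trans hf'

theorem exists_lift_dual (hp : IsProjTensorProduct.{u, v, w} A T p) {X : Type*}
    [NormedAddCommGroup X] [NormedSpace ℂ X] (B : X →L[ℂ] A →L[ℂ] A →L[ℂ] ℂ) :
    ∃ g : T →L[ℂ] StrongDual ℂ X, ∀ a b x, g (p a b) x = B x a b := by
  choose G hG hGn using fun x => hp.exists_lift_scalar (B x)
  have hG_add : ∀ x y, G (x + y) = G x + G y := fun x y => hp.ext fun a b => by simp [hG]
  have hG_smul : ∀ (c : ℂ) x, G (c • x) = c • G x := fun c x => hp.ext fun a b => by simp [hG]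
  obtain ⟨C, -, hC⟩ := ContinuousLinearMap.bound (𝕜 := ℂ) (𝕜₂ := ℂ) (F := A →L[ℂ] A →L[ℂ] ℂ) B
  let Φ : X →L[ℂ] T →L[ℂ] ℂ :=
    LinearMap.mkContinuous ⟨⟨G, hG_add⟩, hG_smul⟩ C fun x => (hGn x).trans (hC x)
  exact ⟨Φ.flip, fun a b x => hG x a b⟩

end IsProjTensorProduct

section DualDerivation

variable {𝕜 : Type*} [NontriviallyNormedField 𝕜] {A : Type*} [NormedRing A] [NormedSpace 𝕜 A]
  {X : Type*} [NormedAddCommGroup X] [NormedSpace 𝕜 X]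

structure IsBimodule (l : A →L[𝕜] X →L[𝕜] X) (r : X →L[𝕜] A →L[𝕜] X) : Prop where
  left_mul : ∀ a b x, l (a * b) x = l a (l b x)
  right_mul : ∀ x a b, r (r x a) b = r x (a * b)
  right_left : ∀ a x b, r (l a x) b = l a (r x b)

def IsDualDerivation (l : A →L[𝕜] X →L[𝕜] X) (r : X →L[𝕜] A →L[𝕜] X)
    (D : A →L[𝕜] StrongDual 𝕜 X) : Prop :=
  ∀ a b x, D (a * b) x = D b (r x a) + D a (l b x)

variable {l : A →L[𝕜] X →L[𝕜] X} {r : X →L[𝕜] A →L[𝕜] X} {D : A →L[𝕜] StrongDual 𝕜 X}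

/-- The defect `D a - 1 · D a = D 1 · a` is the inner derivation of `-(D 1 · 1)`, since
`a · (D 1 · 1) = 0`. -/
theorem IsDualDerivation.exists_inner_of_unit_smul (hX : IsBimodule l r)
    (hD : IsDualDerivation l r D) {f : StrongDual 𝕜 X}
    (hf : ∀ a x, f (r x a) - f (l a x) = D a (r x 1)) :
    ∃ f' : StrongDual 𝕜 X, ∀ a x, D a x = f' (r x a) - f' (l a x) := by
  refine ⟨f - (D 1).comp (l 1), fun a x => ?_⟩
  have hunit : D a x = D a (r x 1) + D 1 (l a x) := by simpa using hD 1 a x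
  have hcorner : D 1 (l 1 (r x a)) = 0 := by
    have h := hD 1 1 (l 1 (r x a))
    rw [hX.right_left, hX.right_mul, ← hX.left_mul] at h
    simpa using h
  have hl1 : l 1 (l a x) = l a x := by rw [← hX.left_mul, one_mul]
  simp only [sub_apply, ContinuousLinearMap.comp_apply, hcorner, hl1]
  linear_combination hunit - hf a x

end DualDerivation

/-- `g (a ⊗ b) = a · D b`. -/
theorem IsDualDerivation.exists_lift_commutator {A : Type u} {T : Type v} [NormedRing A]
    [NormedSpace ℂ A] [NormedAddCommGroup T] [NormedSpace ℂ T] [CompleteSpace T]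
    {p : A →L[ℂ] A →L[ℂ] T} (hp : IsProjTensorProduct.{u, v, w} A T p) {πh : T →L[ℂ] A}
    (hπ : ∀ a b : A, πh (p a b) = a * b) {m : T →L[ℂ] T →L[ℂ] T}
    (hm : ∀ a b c d : A, m (p a b) (p c d) = p (a * c) (d * b))
    {X : Type*} [NormedAddCommGroup X] [NormedSpace ℂ X] {l : A →L[ℂ] X →L[ℂ] X}
    {r : X →L[ℂ] A →L[ℂ] X} {D : A →L[ℂ] StrongDual ℂ X} (hX : IsBimodule l r)
    (hD : IsDualDerivation l r D) :
    ∃ g : T →L[ℂ] StrongDual ℂ X, ∀ t a x,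
      g t (r x a - l a x) = g (m (p a 1 - p 1 a) t) x + D a (r x (πh t)) := by
  obtain ⟨g, hg⟩ := hp.exists_lift_dual ((ContinuousLinearMap.compL ℂ A X _ D.flip).comp r)
  replace hg : ∀ a b x, g (p a b) x = D b (r x a) := fun a b x => by simpa using hg a b x
  refine ⟨g, fun t a x => ?_⟩
  have heq := hp.ext (φ := (ContinuousLinearMap.apply ℂ ℂ (r x a - l a x)).comp g -
      (ContinuousLinearMap.apply ℂ ℂ x).comp (g.comp (m (p a 1 - p 1 a))))
    (ψ := (D a).comp ((r x).comp πh)) fun c d => by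
      have h := hD d a (r x c)
      simp only [sub_apply, ContinuousLinearMap.comp_apply, ContinuousLinearMap.apply_apply,
        map_sub, hm, hg, hπ, hX.right_mul, hX.right_left, mul_one, one_mul] at h ⊢
      linear_combination h
  simpa [sub_eq_iff_eq_add'] using congr($heq t)

theorem IsProjTensorProduct.exists_approxDiagonal {A : Type u} {T : Type v} [NormedRing A]
    [NormedSpace ℂ A] [NormOneClass A] [NormedAddCommGroup T] [NormedSpace ℂ T] [CompleteSpace T]
    {p : A →L[ℂ] A →L[ℂ] T} (hp : IsProjTensorProduct.{u, v, w} A T p) {πh : T →L[ℂ] A}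
    (hπ : ∀ a b : A, πh (p a b) = a * b) {m : T →L[ℂ] T →L[ℂ] T}
    (hm : ∀ a b c d : A, m (p a b) (p c d) = p (a * c) (d * b)) {M : ℝ}
    (hM : ∀ s : Finset T, (∀ x ∈ s, πh x = 0) → ∀ ε : ℝ, 0 < ε →
      ∃ u : T, πh u = 0 ∧ ‖u‖ ≤ M ∧ ∀ x ∈ s, ‖m x u - x‖ < ε) :
    ∃ v : Finset T × ℕ → T, (∀ i, πh (v i) = 1 ∧ ‖v i‖ ≤ 1 + M) ∧
      ∀ k, πh k = 0 → Tendsto (fun i => m k (v i)) atTop (𝓝 0) := by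
  obtain ⟨u, hu, hlim⟩ :=
    exists_tendsto_of_boundedRightApproxIdentity (m · ·) {t | πh t = 0} (M := M) hM
  have hmE : ∀ t, m t (p 1 1) = t := fun t =>
    congr($(hp.ext (φ := m.flip (p 1 1)) (ψ := .id ℂ T) fun a b => by simp [hm]) t)
  refine ⟨fun i => p 1 1 - u i, fun i => ⟨?_, ?_⟩, fun k hk => ?_⟩
  · simp [hπ, show πh (u i) = 0 from (hu i).1]
  · exact (norm_sub_le _ _).trans (add_le_add (by simpa using hp.norm_tmul_le 1 1) (hu i).2)
  · simpa [hmE] using (hlim k hk).const_sub k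

theorem stmt10 {A : Type u} [NormedRing A] [NormedAlgebra ℂ A] [NormOneClass A]
    [CompleteSpace A] {T : Type u} [NormedAddCommGroup T] [NormedSpace ℂ T] [CompleteSpace T]
    (p : A →L[ℂ] A →L[ℂ] T) (hp : IsProjTensorProduct A T p)
    (πh : T →L[ℂ] A) (hπ : ∀ a b : A, πh (p a b) = a * b)
    -- the multiplication of `A ⊗̂ Aᵒᵖ` : `(a ⊗ b) ⋆ (c ⊗ d) = (a c) ⊗ (d b)`
    (m : T →L[ℂ] T →L[ℂ] T)
    (hm : ∀ a b c d : A, m (p a b) (p c d) = p (a * c) (d * b))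
    -- `ker π` has a bounded right approximate identity
    (hbai : ∃ M : ℝ, ∀ s : Finset T, (∀ x ∈ s, πh x = 0) → ∀ ε : ℝ, 0 < ε →
      ∃ u : T, πh u = 0 ∧ ‖u‖ ≤ M ∧ ∀ x ∈ s, ‖m x u - x‖ < ε) :
    IsAmenableMul (ContinuousLinearMap.mul ℂ A) := by
  classical
  intro X _ _ _ l r hl hr hc D hD
  have hX : IsBimodule l r := ⟨hl, hr, hc⟩
  replace hD : IsDualDerivation l r D := hD
  obtain ⟨M, hM⟩ := hbai
  obtain ⟨v, hv, hv_comm⟩ := hp.exists_approxDiagonal hπ hm hM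
  obtain ⟨g, hg⟩ := hD.exists_lift_commutator hp hπ hm hX
  have hbound : ∀ i, ‖g (v i)‖ ≤ ‖g‖ * (1 + M) := fun i =>
    (g.le_opNorm _).trans (mul_le_mul_of_nonneg_left (hv i).2 (norm_nonneg g))
  have hconv : ∀ a x, Tendsto (fun i => g (v i) (r x a - l a x)) atTop
      (𝓝 (D a (r x 1))) := by
    intro a x
    have h0 := (((ContinuousLinearMap.apply ℂ ℂ x).comp g).continuous.tendsto 0).comp
      (hv_comm (p a 1 - p 1 a) (by simp [hπ]))
    simpa [hg, (hv _).1] using h0.add_const (D a (r x 1))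
  obtain ⟨f, hf⟩ := StrongDual.exists_apply_eq_of_tendsto (F := atTop) hbound
  exact hD.exists_inner_of_unit_smul hX fun a x => by rw [← map_sub]; exact hf _ _ (hconv a x)
end
end
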